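/- Let p be a prime and α a positive integer. For every 1 ≤ k ≤ p^α(p-1), the unsigned Stirling number of the first kind satisfies s(p^α(p-1), k) ≡ 1 (mod p) if p^(α-1)(p-1) divides k, and s(p^α(p-1), k) ≡ 0 (mod p) otherwise. -/

import Mathlib

/-!
Over `𝔽_p` the rising factorial `x(x+1)⋯(x+p-1)` is `∏_{a ∈ 𝔽_p} (x + a) = x^p - x`, and
shifting by multiples of `p` does not change it, so with `m = p^(α-1)(p-1)`
`x(x+1)⋯(x+pm-1) = (x^p - x)^m`. By Frobenius `(x^p - x)^(p^(α-1)) = x^(p^(α-1)) (x^m - 1)`,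
and `(y - 1)^(p-1) = 1 + y + ⋯ + y^(p-1)` in characteristic `p`, hence
`(x^p - x)^m = x^m + x^(2m) + ⋯ + x^(pm)`, whose coefficients are the Stirling numbers mod `p`.
-/

open Nat

/-- Unsigned Stirling numbers of the first kind: `stirling1 n k` is the number
of permutations of `n` elements with exactly `k` cycles, so that
`x(x+1)⋯(x+n-1) = Σ_k stirling1 n k * x^k`. -/
def stirling1 : ℕ → ℕ → ℕ
  | 0, 0 => 1
  | 0, _ + 1 => 0
  | _ + 1, 0 => 0
  | n + 1, k + 1 => n * stirling1 n (k + 1) + stirling1 n k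

open Polynomial

theorem ascPochhammer_coeff_eq_stirling1 (S : Type*) [Semiring S] (n k : ℕ) :
    (ascPochhammer S n).coeff k = stirling1 n k := by
  induction n generalizing k with
  | zero => cases k <;> simp [stirling1, coeff_one]
  | succ n ih =>
    rw [ascPochhammer_succ_right, mul_add, coeff_add, ← C_eq_natCast, coeff_mul_C, ih]
    cases k with
    | zero => cases n <;> simp [stirling1]
    | succ k =>
      rw [coeff_mul_X, ih, stirling1, Nat.cast_add, Nat.cast_mul, Nat.cast_comm, add_comm]

theorem mul_sum_range_pow_eq_sum_Icc {R : Type*} [Semiring R] (y : R) (n : ℕ) :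
    y * ∑ i ∈ Finset.range n, y ^ i = ∑ i ∈ Finset.Icc 1 n, y ^ i := by
  rw [Finset.mul_sum, Finset.range_eq_Ico]
  simp_rw [← _root_.pow_succ']
  rw [Finset.sum_Ico_add', zero_add, Finset.Ico_add_one_right_eq_Icc]

theorem coeff_expand_sum_Icc_X_pow {R : Type*} [CommSemiring R] {m : ℕ} (hm : 0 < m) {n k : ℕ}
    (hk1 : 1 ≤ k) (hk2 : k ≤ n * m) :
    (expand R m (∑ i ∈ Finset.Icc 1 n, X ^ i)).coeff k = if m ∣ k then 1 else 0 := by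
  rw [coeff_expand hm]
  split_ifs with hdvd
  · obtain ⟨d, rfl⟩ := hdvd
    have hd : d ∈ Finset.Icc 1 n := Finset.mem_Icc.2
      ⟨Nat.pos_of_mul_pos_left hk1, Nat.le_of_mul_le_mul_left (by linarith) hm⟩
    simp [finsetSum_coeff, coeff_X_pow, Nat.mul_div_cancel_left _ hm, hd]
  · rfl

section CharP

variable {p : ℕ} [Fact p.Prime]

-- Both sides are monic of degree `p` and vanish on all of `𝔽_p`.
theorem ascPochhammer_zmod_prime : ascPochhammer (ZMod p) p = X ^ p - X := by
  have hp : 1 < p := (Fact.out : p.Prime).one_lt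
  have hmonic : (ascPochhammer (ZMod p) p).Monic := monic_ascPochhammer _ _
  have hmonicX : (X ^ p - X : (ZMod p)[X]).Monic :=
    (monic_X_pow p).sub_of_left (by rw [degree_X, degree_X_pow]; exact_mod_cast hp)
  have hdeg : (ascPochhammer (ZMod p) p).natDegree = p := ascPochhammer_natDegree _ _
  refine eq_of_degree_sub_lt_of_eval_finset_eq Finset.univ ?_ fun x _ ↦ ?_
  · calc _ < (ascPochhammer (ZMod p) p).degree := by
          refine degree_sub_lt_left ?_ hmonic.ne_zero
            (by rw [hmonic.leadingCoeff, hmonicX.leadingCoeff])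
          rw [degree_eq_natDegree hmonic.ne_zero, degree_eq_natDegree hmonicX.ne_zero, hdeg,
            FiniteField.X_pow_card_sub_X_natDegree_eq _ hp]
      _ = Finset.univ.card := by
          rw [degree_eq_natDegree hmonic.ne_zero, hdeg, Finset.card_univ, ZMod.card]
  · have hroot : x = -(((-x).val : ℕ) : ZMod p) := by simp
    rw [eval_sub, eval_pow, eval_X, ZMod.pow_card, sub_self, hroot]
    exact ascPochhammer_eval_neg_coe_nat_of_lt (ZMod.val_lt _)

theorem ascPochhammer_zmod_prime_mul (t : ℕ) :
    ascPochhammer (ZMod p) (p * t) = (X ^ p - X) ^ t := by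
  induction t with
  | zero => simp
  | succ t ih =>
    rw [mul_add_one, ← ascPochhammer_mul, ih, ascPochhammer_zmod_prime, Nat.cast_mul,
      CharP.cast_eq_zero, zero_mul, add_zero, comp_X, pow_succ]

theorem sub_one_pow_prime_sub_one_eq_geom_sum {R : Type*} [CommRing R] [CharP R p] (y : R) :
    (y - 1) ^ (p - 1) = ∑ i ∈ Finset.range p, y ^ i := by
  have h := cyclotomic_mul_prime_eq_pow_of_not_dvd R (p := p) (n := 1)
    (Nat.Prime.not_dvd_one Fact.out)
  rw [one_mul, cyclotomic_one, cyclotomic_prime] at h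
  simpa using congrArg (eval y) h.symm

theorem ascPochhammer_zmod_pow_succ_mul_sub_one (a : ℕ) :
    ascPochhammer (ZMod p) (p ^ (a + 1) * (p - 1)) =
      expand (ZMod p) (p ^ a * (p - 1)) (∑ i ∈ Finset.Icc 1 p, X ^ i) := by
  have hfrob : (X ^ p - X : (ZMod p)[X]) ^ p ^ a = X ^ p ^ a * (X ^ (p ^ a * (p - 1)) - 1) := by
    have hexp : p * p ^ a = p ^ a + p ^ a * (p - 1) := by
      rw [add_comm, ← mul_add_one, Nat.sub_add_cancel (Fact.out : p.Prime).one_le, mul_comm]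
    rw [sub_pow_char_pow, ← pow_mul, mul_sub, ← pow_add, hexp, mul_one]
  calc ascPochhammer (ZMod p) (p ^ (a + 1) * (p - 1))
      = ((X ^ p - X) ^ p ^ a) ^ (p - 1) := by
        rw [_root_.pow_succ', mul_assoc, ascPochhammer_zmod_prime_mul, pow_mul]
    _ = X ^ (p ^ a * (p - 1)) * ∑ i ∈ Finset.range p, (X ^ (p ^ a * (p - 1))) ^ i := by
        rw [hfrob, mul_pow, ← pow_mul, sub_one_pow_prime_sub_one_eq_geom_sum]
    _ = _ := by
        rw [mul_sum_range_pow_eq_sum_Icc, map_sum]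
        simp only [map_pow, expand_X]

end CharP

/-- For a prime `p`, a positive integer `α` and `1 ≤ k ≤ p^α(p-1)`:
`s(p^α(p-1), k) ≡ 1 (mod p)` if `p^(α-1)(p-1) ∣ k`, and
`s(p^α(p-1), k) ≡ 0 (mod p)` otherwise. -/
theorem stirling1_pow_mod (p : ℕ) (hp : p.Prime) (α : ℕ) (hα : 0 < α) (k : ℕ)
    (hk1 : 1 ≤ k) (hk2 : k ≤ p ^ α * (p - 1)) :
    stirling1 (p ^ α * (p - 1)) k ≡ (if p ^ (α - 1) * (p - 1) ∣ k then 1 else 0) [MOD p] := by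
  have : Fact p.Prime := ⟨hp⟩
  obtain ⟨a, rfl⟩ := Nat.exists_eq_add_one_of_ne_zero hα.ne'
  have hm : 0 < p ^ a * (p - 1) := Nat.mul_pos (pow_pos hp.pos a) (Nat.sub_pos_of_lt hp.one_lt)
  have hk2' : k ≤ p * (p ^ a * (p - 1)) := by rwa [_root_.pow_succ', mul_assoc] at hk2
  rw [Nat.add_sub_cancel, ← ZMod.natCast_eq_natCast_iff, ← ascPochhammer_coeff_eq_stirling1,
    ascPochhammer_zmod_pow_succ_mul_sub_one, coeff_expand_sum_Icc_X_pow hm hk1 hk2',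
    Nat.cast_ite, Nat.cast_one, Nat.cast_zero]
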